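/- arXiv:2203.02599 — 4 statements merged into one kernel-verified Lean document; each statement's English description precedes it below -/
import Mathlib

section
/- For every integrable random variable X on an atomless probability space and every real threshold t, the set of maximizers over α ∈ [0,1] of the function g(α) = (1 − α)·(ES_α(X) − t) is exactly the closed interval [ℙ(X < t), ℙ(X ≤ t)]; that is, g(α) = E[(X − t)_+] if and only if ℙ(X < t) ≤ α ≤ ℙ(X ≤ t). -/
open MeasureTheory Set

/-- An atomless measure: every set of nonzero measure can be split nontrivially. -/
def Atomless {Ω : Type*} [MeasurableSpace Ω] (μ : Measure Ω) : Prop :=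
  ∀ A : Set Ω, MeasurableSet A → μ A ≠ 0 →
    ∃ B ⊆ A, MeasurableSet B ∧ μ B ≠ 0 ∧ μ B ≠ μ A

/-- Left quantile (lower Value-at-Risk) of `X` at level `β`. -/
noncomputable def VaR {Ω : Type*} [MeasurableSpace Ω] (μ : Measure Ω) (X : Ω → ℝ) (β : ℝ) : ℝ :=
  sInf {t : ℝ | ENNReal.ofReal β ≤ μ {ω | X ω ≤ t}}

/-- Expected Shortfall of `X` at level `α ∈ [0,1)`; the value at `α = 1` is junk, but it is
only ever used multiplied by `1 - α = 0`, implementing the convention `0 · x = 0`. -/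
noncomputable def ES {Ω : Type*} [MeasurableSpace Ω] (μ : Measure Ω) (X : Ω → ℝ) (α : ℝ) : ℝ :=
  (1 - α)⁻¹ * ∫ β in Set.Ioo α 1, VaR μ X β

/-!
Let `q` be the left quantile function of the law `ν` of `X`, so that `VaR_β(X) = q β`. Being
the generalised inverse of the right-continuous cdf `F` of `ν`, `q` pushes Lebesgue measure on
`(0,1)` forward to `ν`; hence `E[(X - t)₊] = ∫₀¹ (q - t)₊`, while
`(1 - α)(ES_α(X) - t) = ∫_α¹ (q - t)`. The gap between the two is
`∫₀^α (q - t)₊ + ∫_α¹ (t - q)₊`, a sum of nonnegative terms. Since `q β ≤ t ↔ β ≤ F t` and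
`q β < t` for `β < F(t⁻)`, the first term vanishes iff `α ≤ F t = ℙ(X ≤ t)` and the second iff
`ℙ(X < t) = F(t⁻) ≤ α`.
-/

open ProbabilityTheory Filter Topology

lemma setIntegral_max_sub_eq_add {f : ℝ → ℝ} {a b c α : ℝ} (hα : α ∈ Icc a b)
    (hf : IntegrableOn f (Ioc a b)) :
    ∫ x in Ioc a b, max (f x - c) 0 = (∫ x in Ioo α b, f x - c) +
      ((∫ x in Ioc a α, max (f x - c) 0) + ∫ x in Ioo α b, max (c - f x) 0) := by
  have hg : IntegrableOn (fun x => f x - c) (Ioc a b) :=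
    hf.sub (integrableOn_const measure_Ioc_lt_top.ne)
  have hgα : IntegrableOn (fun x => f x - c) (Ioc α b) := hg.mono_set (Ioc_subset_Ioc_left hα.1)
  rw [← Ioc_union_Ioc_eq_Ioc hα.1 hα.2, setIntegral_union (Ioc_disjoint_Ioc_of_le le_rfl)
    measurableSet_Ioc (IntegrableOn.mono_set hg.pos_part (Ioc_subset_Ioc_right hα.2)) hgα.pos_part,
    ← integral_Ioc_eq_integral_Ioo, ← integral_Ioc_eq_integral_Ioo (f := fun x => max (c - f x) 0),
    add_left_comm,
    ← integral_add hgα (by simpa only [Pi.neg_apply, neg_sub] using hgα.neg.pos_part)]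
  congr 1
  refine setIntegral_congr_fun measurableSet_Ioc fun x _ => ?_
  rw [← neg_sub (f x) c]
  linarith [max_zero_sub_max_neg_zero_eq_self (f x - c)]

lemma setIntegral_pos_of_pos_on_Ioo {f : ℝ → ℝ} {s : Set ℝ} {c d : ℝ} (hf : IntegrableOn f s)
    (hf₀ : 0 ≤ f) (hcd : c < d) (hsub : Ioo c d ⊆ s) (hpos : ∀ x ∈ Ioo c d, 0 < f x) :
    0 < ∫ x in s, f x := by
  rw [setIntegral_pos_iff_support_of_nonneg_ae (Eventually.of_forall hf₀) hf]
  calc (0 : ENNReal) < volume (Ioo c d) := by simpa using hcd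
    _ ≤ volume (Function.support f ∩ s) := measure_mono fun x hx => ⟨(hpos x hx).ne', hsub hx⟩

noncomputable def leftQuantile (ν : Measure ℝ) (β : ℝ) : ℝ :=
  sInf {s : ℝ | β ≤ cdf ν s}

namespace leftQuantile

variable {ν : Measure ℝ} {β s : ℝ}

lemma bddBelow_setOf_le_cdf (hβ : 0 < β) : BddBelow {s : ℝ | β ≤ cdf ν s} := by
  obtain ⟨s₀, hs₀⟩ := eventually_atBot.1 ((tendsto_cdf_atBot ν).eventually_lt_const hβ)
  exact ⟨s₀, fun s hs => le_of_not_gt fun hlt => (hs₀ s hlt.le).not_ge hs⟩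

lemma nonempty_setOf_le_cdf (hβ : β < 1) : {s : ℝ | β ≤ cdf ν s}.Nonempty :=
  ((tendsto_cdf_atTop ν).eventually_const_lt hβ).exists.imp fun _ => le_of_lt

lemma le_of_le_cdf (hβ : 0 < β) (h : β ≤ cdf ν s) : leftQuantile ν β ≤ s :=
  csInf_le (bddBelow_setOf_le_cdf hβ) h

lemma le_cdf_leftQuantile (hβ : β ∈ Ioo 0 1) : β ≤ cdf ν (leftQuantile ν β) := by
  have hright : Tendsto (cdf ν) (𝓝[>] (leftQuantile ν β)) (𝓝 (cdf ν (leftQuantile ν β))) :=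
    ((cdf ν).right_continuous _).mono Ioi_subset_Ici_self
  refine ge_of_tendsto hright (eventually_nhdsWithin_of_forall fun y hy => ?_)
  obtain ⟨u, hu, huy⟩ := (csInf_lt_iff (bddBelow_setOf_le_cdf hβ.1)
    (nonempty_setOf_le_cdf hβ.2)).1 (mem_Ioi.1 hy)
  exact hu.trans ((cdf ν).mono huy.le)

lemma le_iff_le_cdf (hβ : β ∈ Ioo 0 1) : leftQuantile ν β ≤ s ↔ β ≤ cdf ν s :=
  ⟨fun h => (le_cdf_leftQuantile hβ).trans ((cdf ν).mono h), le_of_le_cdf hβ.1⟩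

lemma monotoneOn : MonotoneOn (leftQuantile ν) (Ioo 0 1) := fun _ hβ _ hβ' h =>
  le_of_le_cdf hβ.1 (h.trans (le_cdf_leftQuantile hβ'))

lemma aemeasurable : AEMeasurable (leftQuantile ν) (volume.restrict (Ioo 0 1)) :=
  aemeasurable_restrict_of_monotoneOn measurableSet_Ioo monotoneOn

lemma setIntegral_Ioc_max_sub_eq_zero_iff (hq : IntegrableOn (leftQuantile ν) (Ioc 0 1))
    {α t : ℝ} (hα : α ∈ Icc 0 1) :
    ∫ β in Ioc 0 α, max (leftQuantile ν β - t) 0 = 0 ↔ α ≤ cdf ν t := by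
  refine ⟨fun h => le_of_not_gt fun htα => h.not_gt ?_, fun h => ?_⟩
  · have hint : IntegrableOn (fun β => leftQuantile ν β - t) (Ioc 0 α) :=
      (hq.mono_set (Ioc_subset_Ioc_right hα.2)).sub (integrableOn_const measure_Ioc_lt_top.ne)
    refine setIntegral_pos_of_pos_on_Ioo hint.pos_part (fun _ => le_max_right _ _) htα
      (Ioo_subset_Ioc_self.trans (Ioc_subset_Ioc_left (cdf_nonneg ν t))) fun β hβ => ?_
    have hβ₀₁ : β ∈ Ioo 0 1 := ⟨(cdf_nonneg ν t).trans_lt hβ.1, hβ.2.trans_le hα.2⟩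
    have : t < leftQuantile ν β := lt_of_not_ge fun hle => hβ.1.not_ge ((le_iff_le_cdf hβ₀₁).1 hle)
    exact lt_max_of_lt_left (sub_pos.2 this)
  · exact setIntegral_eq_zero_of_forall_eq_zero fun β hβ =>
      max_eq_right (sub_nonpos.2 (le_of_le_cdf hβ.1 (hβ.2.trans h)))

variable [IsProbabilityMeasure ν]

lemma measureReal_Iio_eq_leftLim (t : ℝ) : ν.real (Iio t) = Function.leftLim (cdf ν) t := by
  have h := (cdf ν).measure_Iio (tendsto_cdf_atBot ν) t
  rw [measure_cdf, sub_zero] at h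
  rw [measureReal_def, h, ENNReal.toReal_ofReal]
  exact (cdf_nonneg ν (t - 1)).trans ((cdf ν).mono.le_leftLim (sub_one_lt t))

lemma lt_of_lt_measureReal_Iio {t : ℝ} (hβ : 0 < β) (h : β < ν.real (Iio t)) :
    leftQuantile ν β < t := by
  rw [measureReal_Iio_eq_leftLim] at h
  obtain ⟨s, hβs, hst⟩ :=
    (((cdf ν).mono.tendsto_leftLim t).eventually_const_lt h |>.and self_mem_nhdsWithin).exists
  exact (le_of_le_cdf hβ hβs.le).trans_lt hst

lemma le_measureReal_Iio_of_lt {t : ℝ} (hβ : β ∈ Ioo 0 1) (h : leftQuantile ν β < t) :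
    β ≤ ν.real (Iio t) := by
  calc β ≤ cdf ν (leftQuantile ν β) := le_cdf_leftQuantile hβ
    _ = ν.real (Iic (leftQuantile ν β)) := cdf_eq_real ν _
    _ ≤ ν.real (Iio t) := measureReal_mono (Iic_subset_Iio.2 h)

theorem map_volume_restrict_Ioo : (volume.restrict (Ioo 0 1)).map (leftQuantile ν) = ν := by
  refine Measure.ext_of_Iic _ _ fun s => ?_
  rw [Measure.map_apply_of_aemeasurable aemeasurable measurableSet_Iic,
    Measure.restrict_apply' measurableSet_Ioo, ← ofReal_cdf]
  have hpre : leftQuantile ν ⁻¹' Iic s ∩ Ioo 0 1 = Ioo 0 1 ∩ Iic (cdf ν s) := by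
    ext β
    simp only [mem_inter_iff, mem_preimage, mem_Iic]
    exact ⟨fun h => ⟨h.2, (le_iff_le_cdf h.2).1 h.1⟩, fun h => ⟨(le_iff_le_cdf h.1).2 h.2, h.1⟩⟩
  rw [hpre, measure_congr (ae_eq_set_inter (Ioo_ae_eq_Ioc (μ := volume)) (ae_eq_refl (Iic _))),
    Ioc_inter_Iic, min_eq_right (cdf_le_one ν s), Real.volume_Ioc, sub_zero]

theorem integral_comp {g : ℝ → ℝ} (hg : AEStronglyMeasurable g ν) :
    ∫ β in Ioo 0 1, g (leftQuantile ν β) = ∫ x, g x ∂ν := by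
  rw [← map_volume_restrict_Ioo (ν := ν)] at hg
  rw [← integral_map aemeasurable hg, map_volume_restrict_Ioo]

theorem integrableOn_Ioc (h : Integrable id ν) : IntegrableOn (leftQuantile ν) (Ioc 0 1) := by
  rw [← map_volume_restrict_Ioo (ν := ν)] at h
  exact (integrableOn_Ioc_iff_integrableOn_Ioo enorm_ne_top).2
    ((integrable_map_measure aestronglyMeasurable_id aemeasurable).1 h)

lemma setIntegral_Ioo_max_sub_eq_zero_iff (hq : IntegrableOn (leftQuantile ν) (Ioc 0 1))
    {α t : ℝ} (hα : α ∈ Icc 0 1) :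
    ∫ β in Ioo α 1, max (t - leftQuantile ν β) 0 = 0 ↔ ν.real (Iio t) ≤ α := by
  refine ⟨fun h => le_of_not_gt fun hαt => h.not_gt ?_, fun h => ?_⟩
  · have hint : IntegrableOn (fun β => t - leftQuantile ν β) (Ioo α 1) :=
      (integrableOn_const measure_Ioo_lt_top.ne).sub
        (hq.mono_set (Ioo_subset_Ioc_self.trans (Ioc_subset_Ioc_left hα.1)))
    refine setIntegral_pos_of_pos_on_Ioo hint.pos_part (fun _ => le_max_right _ _) hαt
      (Ioo_subset_Ioo_right measureReal_le_one) fun β hβ => ?_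
    exact lt_max_of_lt_left (sub_pos.2 (lt_of_lt_measureReal_Iio (hα.1.trans_lt hβ.1) hβ.2))
  · refine setIntegral_eq_zero_of_forall_eq_zero fun β hβ =>
      max_eq_right (sub_nonpos.2 (le_of_not_gt fun hlt => ?_))
    have := le_measureReal_Iio_of_lt ⟨hα.1.trans_lt hβ.1, hβ.2⟩ hlt
    linarith [hβ.1]

theorem setIntegral_Ioo_sub_eq_iff (hq : IntegrableOn (leftQuantile ν) (Ioc 0 1))
    {α t : ℝ} (hα : α ∈ Icc 0 1) :
    ∫ β in Ioo α 1, (leftQuantile ν β - t) = ∫ β in Ioc 0 1, max (leftQuantile ν β - t) 0 ↔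
      ν.real (Iio t) ≤ α ∧ α ≤ cdf ν t := by
  rw [setIntegral_max_sub_eq_add hα hq, left_eq_add, add_eq_zero_iff_of_nonneg
      (setIntegral_nonneg measurableSet_Ioc fun _ _ => le_max_right _ _)
      (setIntegral_nonneg measurableSet_Ioo fun _ _ => le_max_right _ _),
    setIntegral_Ioc_max_sub_eq_zero_iff hq hα, setIntegral_Ioo_max_sub_eq_zero_iff hq hα, and_comm]

end leftQuantile

section VaR

variable {Ω : Type*} [MeasurableSpace Ω] {μ : Measure Ω} {X : Ω → ℝ}

lemma VaR_eq_leftQuantile [IsProbabilityMeasure μ] (hX : Measurable X) :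
    VaR μ X = leftQuantile (μ.map X) := by
  have : IsProbabilityMeasure (μ.map X) := Measure.isProbabilityMeasure_map hX.aemeasurable
  funext β
  refine congrArg sInf (ext fun s => ?_)
  change ENNReal.ofReal β ≤ μ (X ⁻¹' Iic s) ↔ β ≤ cdf (μ.map X) s
  rw [← ENNReal.ofReal_le_ofReal_iff (cdf_nonneg _ s), ofReal_cdf,
    Measure.map_apply hX measurableSet_Iic]

lemma one_sub_mul_ES_sub {α : ℝ} (t : ℝ) (hα : α ≤ 1) (hint : IntegrableOn (VaR μ X) (Ioo α 1)) :
    (1 - α) * (ES μ X α - t) = ∫ β in Ioo α 1, (VaR μ X β - t) := by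
  rw [integral_sub hint (integrableOn_const measure_Ioo_lt_top.ne), setIntegral_const,
    Real.volume_real_Ioo_of_le hα, smul_eq_mul, ES]
  rcases hα.lt_or_eq with hlt | rfl
  · field_simp [(sub_pos.2 hlt).ne']
  · simp

end VaR

theorem reverse_ES_maximizers_general {Ω : Type*} [MeasurableSpace Ω] (μ : Measure Ω)
    [IsProbabilityMeasure μ] (X : Ω → ℝ)
    (hXmeas : Measurable X) (hXint : Integrable X μ) (t : ℝ) :
    {α ∈ Set.Icc (0 : ℝ) 1 | (1 - α) * (ES μ X α - t) = ∫ ω, max (X ω - t) 0 ∂μ}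
      = Set.Icc (μ {ω | X ω < t}).toReal (μ {ω | X ω ≤ t}).toReal := by
  set ν := μ.map X
  have : IsProbabilityMeasure ν := Measure.isProbabilityMeasure_map hXmeas.aemeasurable
  have hq : IntegrableOn (leftQuantile ν) (Ioc 0 1) := leftQuantile.integrableOn_Ioc
    ((integrable_map_measure aestronglyMeasurable_id hXmeas.aemeasurable).2 hXint)
  have hM : ∫ ω, max (X ω - t) 0 ∂μ = ∫ β in Ioc 0 1, max (leftQuantile ν β - t) 0 := by
    have hg : Continuous fun x : ℝ => max (x - t) 0 := by fun_prop
    rw [integral_Ioc_eq_integral_Ioo, leftQuantile.integral_comp hg.aestronglyMeasurable,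
      integral_map hXmeas.aemeasurable hg.aestronglyMeasurable]
  have hlt : (μ {ω | X ω < t}).toReal = ν.real (Iio t) := by
    rw [measureReal_def, Measure.map_apply hXmeas measurableSet_Iio]; rfl
  have hle : (μ {ω | X ω ≤ t}).toReal = cdf ν t := by
    rw [cdf_eq_real, measureReal_def, Measure.map_apply hXmeas measurableSet_Iic]; rfl
  have key (α : ℝ) (hα : α ∈ Icc 0 1) : (1 - α) * (ES μ X α - t) = ∫ ω, max (X ω - t) 0 ∂μ ↔
      ν.real (Iio t) ≤ α ∧ α ≤ cdf ν t := by
    rw [one_sub_mul_ES_sub t hα.2, VaR_eq_leftQuantile hXmeas, hM]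
    · exact leftQuantile.setIntegral_Ioo_sub_eq_iff hq hα
    · rw [VaR_eq_leftQuantile hXmeas]
      exact hq.mono_set (Ioo_subset_Ioc_self.trans (Ioc_subset_Ioc_left hα.1))
  ext α
  rw [mem_sep_iff, mem_Icc, hlt, hle]
  refine ⟨fun ⟨hα, h⟩ => (key α hα).1 h, fun h => ?_⟩
  have hα : α ∈ Icc 0 1 := ⟨measureReal_nonneg.trans h.1, h.2.trans (cdf_le_one ν t)⟩
  exact ⟨hα, (key α hα).2 h⟩

/-- The set of maximizers over `α ∈ [0,1]` of `g(α) = (1 - α)(ES_α(X) - t)`, i.e. the set of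
`α ∈ [0,1]` where `g` attains the value `E[(X - t)_+]`, is exactly `[ℙ(X < t), ℙ(X ≤ t)]`. -/
theorem reverse_ES_maximizers {Ω : Type*} [MeasurableSpace Ω] (μ : Measure Ω)
    [IsProbabilityMeasure μ] (hμ : Atomless μ) (X : Ω → ℝ)
    (hXmeas : Measurable X) (hXint : Integrable X μ) (t : ℝ) :
    {α ∈ Set.Icc (0 : ℝ) 1 | (1 - α) * (ES μ X α - t) = ∫ ω, max (X ω - t) 0 ∂μ}
      = Set.Icc (μ {ω | X ω < t}).toReal (μ {ω | X ω ≤ t}).toReal :=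
  reverse_ES_maximizers_general μ X hXmeas hXint t
end

section
/- For every integrable random variable X on an atomless probability space and every α ∈ (0,1), ES_α(X) = min over t ∈ ℝ of { t + (1/(1−α))·E[(X − t)_+] }, and the minimum is attained. -/
open MeasureTheory Set

/-!
Under Lebesgue measure on `(0, 1)`, the quantile function `β ↦ VaR_β(X)` has the law of `X`: it is
the generalized inverse of the distribution function `F` of `X`, i.e. `VaR_β(X) ≤ t ↔ β ≤ F t`.
Hence `E[(X - s)₊] = ∫₀¹ (VaR_β(X) - s)₊ dβ`, and the formula becomes a statement about a
nondecreasing integrable `q` on `(0, 1)`: from `q ≤ s + (q - s)₊` we get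
`∫_α^1 q ≤ (1 - α) s + ∫₀¹ (q - s)₊` for every `s`, with equality at `s = q α`, where `(q - s)₊`
vanishes on `(0, α]` and equals `q - s` on `(α, 1)`.
-/

open ProbabilityTheory

theorem StieltjesFunction.sInf_setOf_le_le_iff (F : StieltjesFunction ℝ) {β t : ℝ}
    (hmem : ∃ t, β ≤ F t) (hlow : ∃ t, F t < β) :
    sInf {t | β ≤ F t} ≤ t ↔ β ≤ F t := by
  obtain ⟨t₀, ht₀⟩ := hlow
  have hbdd : BddBelow {t | β ≤ F t} := ⟨t₀, fun t ht =>
    le_of_lt (F.mono.reflect_lt (ht₀.trans_le ht))⟩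
  refine ⟨fun h => ?_, fun h => csInf_le hbdd h⟩
  suffices β ≤ F (sInf {t | β ≤ F t}) from this.trans (F.mono h)
  -- `β ≤ F u` for every `u` above the infimum, so right continuity applies
  refine ge_of_tendsto ((F.right_continuous _).mono Ioi_subset_Ici_self) ?_
  filter_upwards [self_mem_nhdsWithin] with u hu
  obtain ⟨v, hv, hvu⟩ := exists_lt_of_csInf_lt hmem hu
  exact le_trans hv (F.mono hvu.le)

section VaR

variable {Ω : Type*} [MeasurableSpace Ω] {μ : Measure Ω} [IsProbabilityMeasure μ] {X : Ω → ℝ}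

theorem VaR_eq_sInf_cdf (hX : AEMeasurable X μ) (β : ℝ) :
    VaR μ X β = sInf {t | β ≤ cdf (μ.map X) t} := by
  have := Measure.isProbabilityMeasure_map (μ := μ) hX
  unfold VaR
  congr 1
  ext t
  change ENNReal.ofReal β ≤ μ (X ⁻¹' Iic t) ↔ β ≤ cdf (μ.map X) t
  rw [← Measure.map_apply_of_aemeasurable hX measurableSet_Iic, ← ofReal_cdf,
    ENNReal.ofReal_le_ofReal_iff (cdf_nonneg _ _)]

theorem VaR_le_iff (hX : AEMeasurable X μ) {β t : ℝ} (hβ : β ∈ Ioo 0 1) :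
    VaR μ X β ≤ t ↔ β ≤ cdf (μ.map X) t := by
  have := Measure.isProbabilityMeasure_map (μ := μ) hX
  rw [VaR_eq_sInf_cdf hX]
  exact (cdf _).sInf_setOf_le_le_iff
    (((tendsto_cdf_atTop _).eventually (lt_mem_nhds hβ.2)).exists.imp fun _ => le_of_lt)
    ((tendsto_cdf_atBot _).eventually (gt_mem_nhds hβ.1)).exists

theorem monotoneOn_VaR (hX : AEMeasurable X μ) : MonotoneOn (VaR μ X) (Ioo 0 1) :=
  fun _ ha _ hb hab => (VaR_le_iff hX ha).2 (hab.trans ((VaR_le_iff hX hb).1 le_rfl))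

theorem aemeasurable_VaR (hX : AEMeasurable X μ) :
    AEMeasurable (VaR μ X) (volume.restrict (Ioo 0 1)) :=
  aemeasurable_restrict_of_monotoneOn measurableSet_Ioo (monotoneOn_VaR hX)

theorem volume_Iic_inter_Ioo_zero_one {p : ℝ} (hp : p ≤ 1) :
    volume (Iic p ∩ Ioo 0 1) = ENNReal.ofReal p := by
  rw [measure_congr ((ae_eq_refl _).inter Ioo_ae_eq_Ioc), inter_comm, Ioc_inter_Iic,
    min_eq_right hp, Real.volume_Ioc, sub_zero]

theorem map_VaR (hX : AEMeasurable X μ) :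
    (volume.restrict (Ioo 0 1)).map (VaR μ X) = μ.map X := by
  have := Measure.isProbabilityMeasure_map (μ := μ) hX
  refine Measure.ext_of_Iic _ _ fun t => ?_
  have hpre : VaR μ X ⁻¹' Iic t ∩ Ioo 0 1 = Iic (cdf (μ.map X) t) ∩ Ioo 0 1 := by
    ext β
    simp only [mem_inter_iff, mem_preimage, mem_Iic]
    exact and_congr_left (VaR_le_iff hX)
  rw [Measure.map_apply_of_aemeasurable (aemeasurable_VaR hX) measurableSet_Iic,
    Measure.restrict_apply' measurableSet_Ioo, hpre,
    volume_Iic_inter_Ioo_zero_one (cdf_le_one _ _), ofReal_cdf]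

theorem integral_comp_VaR (hX : AEMeasurable X μ) {g : ℝ → ℝ}
    (hg : AEStronglyMeasurable g (μ.map X)) :
    ∫ β in Ioo 0 1, g (VaR μ X β) = ∫ ω, g (X ω) ∂μ := by
  rw [← integral_map (aemeasurable_VaR hX) (by rwa [map_VaR hX]), map_VaR hX, integral_map hX hg]

theorem integrableOn_VaR (hX : Integrable X μ) : IntegrableOn (VaR μ X) (Ioo 0 1) := by
  have hmap := map_VaR hX.aemeasurable
  rw [IntegrableOn, ← Function.id_comp (VaR μ X),
    ← integrable_map_measure (by rw [hmap]; exact aestronglyMeasurable_id)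
      (aemeasurable_VaR hX.aemeasurable),
    hmap, integrable_map_measure aestronglyMeasurable_id hX.aemeasurable]
  exact hX

end VaR

section RockafellarUryasev

variable {q : ℝ → ℝ} {a b α : ℝ}

theorem setIntegral_Ioo_le_mul_add_setIntegral_posPart (hq : IntegrableOn q (Ioo a b))
    (haα : a ≤ α) (hαb : α ≤ b) (s : ℝ) :
    ∫ β in Ioo α b, q β ≤ (b - α) * s + ∫ β in Ioo a b, max (q β - s) 0 := by
  have hsub : Ioo α b ⊆ Ioo a b := Ioo_subset_Ioo_left haα
  have hconst : IntegrableOn (fun _ => s) (Ioo α b) := integrableOn_const measure_Ioo_lt_top.ne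
  have hpos : IntegrableOn (fun β => max (q β - s) 0) (Ioo a b) :=
    (hq.sub (integrableOn_const measure_Ioo_lt_top.ne)).pos_part
  have hle : ∫ β in Ioo α b, (q β - s) ≤ ∫ β in Ioo α b, max (q β - s) 0 :=
    integral_mono ((hq.mono_set hsub).sub hconst) (hpos.mono_set hsub) fun β => le_max_left _ _
  have hmono : ∫ β in Ioo α b, max (q β - s) 0 ≤ ∫ β in Ioo a b, max (q β - s) 0 :=
    setIntegral_mono_set hpos (.of_forall fun _ => le_max_right _ _) hsub.eventuallyLE
  rw [integral_sub (hq.mono_set hsub) hconst, setIntegral_const, Real.volume_real_Ioo_of_le hαb,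
    smul_eq_mul] at hle
  linarith

theorem setIntegral_Ioo_eq_mul_add_setIntegral_posPart (hmono : MonotoneOn q (Ioo a b))
    (hq : IntegrableOn q (Ioo a b)) (hα : α ∈ Ioo a b) :
    ∫ β in Ioo α b, q β = (b - α) * q α + ∫ β in Ioo a b, max (q β - q α) 0 := by
  have hsub : Ioo α b ⊆ Ioo a b := Ioo_subset_Ioo_left hα.1.le
  have hlow : ∫ β in Ioo a b, max (q β - q α) 0 = ∫ β in Ioo α b, max (q β - q α) 0 :=
    setIntegral_eq_of_subset_of_forall_sdiff_eq_zero measurableSet_Ioo hsub fun β hβ => by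
      have hβα : β ≤ α := not_lt.1 fun h => hβ.2 ⟨h, hβ.1.2⟩
      simpa using hmono hβ.1 hα hβα
  have hhigh : ∫ β in Ioo α b, max (q β - q α) 0 = ∫ β in Ioo α b, (q β - q α) :=
    setIntegral_congr_fun measurableSet_Ioo fun β hβ =>
      max_eq_left (sub_nonneg.2 (hmono hα (hsub hβ) hβ.1.le))
  rw [hlow, hhigh, integral_sub (hq.mono_set hsub) (integrableOn_const measure_Ioo_lt_top.ne),
    setIntegral_const, Real.volume_real_Ioo_of_le hα.2.le, smul_eq_mul]
  ring

theorem isLeast_setIntegral_posPart (hmono : MonotoneOn q (Ioo a b))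
    (hq : IntegrableOn q (Ioo a b)) (hα : α ∈ Ioo a b) :
    IsLeast {y | ∃ s, y = s + (b - α)⁻¹ * ∫ β in Ioo a b, max (q β - s) 0}
      ((b - α)⁻¹ * ∫ β in Ioo α b, q β) := by
  have hpos : 0 < b - α := sub_pos.2 hα.2
  refine ⟨⟨q α, ?_⟩, ?_⟩
  · rw [setIntegral_Ioo_eq_mul_add_setIntegral_posPart hmono hq hα, mul_add,
      inv_mul_cancel_left₀ hpos.ne']
  · rintro _ ⟨s, rfl⟩
    have := mul_le_mul_of_nonneg_left
      (setIntegral_Ioo_le_mul_add_setIntegral_posPart hq hα.1.le hα.2.le s)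
      (inv_nonneg.2 hpos.le)
    rwa [mul_add, inv_mul_cancel_left₀ hpos.ne'] at this

end RockafellarUryasev

theorem ES_optimization_general {Ω : Type*} [MeasurableSpace Ω] (μ : Measure Ω)
    [IsProbabilityMeasure μ] (X : Ω → ℝ)
    (hXint : Integrable X μ)
    (α : ℝ) (hα : α ∈ Set.Ioo (0 : ℝ) 1) :
    IsLeast {y : ℝ | ∃ s : ℝ, y = s + (1 - α)⁻¹ * ∫ ω, max (X ω - s) 0 ∂μ}
      (ES μ X α) := by
  have hposPart (s : ℝ) : ∫ ω, max (X ω - s) 0 ∂μ = ∫ β in Ioo 0 1, max (VaR μ X β - s) 0 :=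
    (integral_comp_VaR hXint.aemeasurable (g := fun x => max (x - s) 0) (by fun_prop)).symm
  simp_rw [hposPart]
  exact isLeast_setIntegral_posPart (monotoneOn_VaR hXint.aemeasurable)
    (integrableOn_VaR hXint) hα

/-- **ES optimization formula (Rockafellar–Uryasev).** For an integrable random variable `X`
on an atomless probability space and `α ∈ (0,1)`,
`ES_α(X) = min over t ∈ ℝ of { t + (1/(1-α)) E[(X - t)_+] }`, and the minimum is attained. -/
theorem ES_optimization {Ω : Type*} [MeasurableSpace Ω] (μ : Measure Ω)
    [IsProbabilityMeasure μ] (hμ : Atomless μ) (X : Ω → ℝ)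
    (hXmeas : Measurable X) (hXint : Integrable X μ)
    (α : ℝ) (hα : α ∈ Set.Ioo (0 : ℝ) 1) :
    IsLeast {y : ℝ | ∃ s : ℝ, y = s + (1 - α)⁻¹ * ∫ ω, max (X ω - s) 0 ∂μ}
      (ES μ X α) :=
  ES_optimization_general μ X hXint α hα
end

section
/- For every integrable random variable X on an atomless probability space and every real t, E[min(X, t)] = min over α ∈ [0,1] of { α·ES⁻_α(X) + (1 − α)·t }, the minimum is attained, and the set of minimizers is exactly [ℙ(X < t), ℙ(X ≤ t)]. -/
/-!
Let `q` be the left quantile function of the law `ν` of `X`. Under Lebesgue measure on `(0, 1)`,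
`q` has law `ν`, so `E[min(X, t)] = ∫₀¹ min(q, t)`, while
`α ES⁻_α(X) + (1 - α) t = ∫₀^α q + ∫_α^1 t`. The difference is
`∫₀^α (q - t)⁺ + ∫_α^1 (t - q)⁺ ≥ 0`. On `(0, 1)`, `q ≤ t` exactly below `ℙ(X ≤ t)`, and `q < t`
below `ℙ(X < t)` but not above it; so the first term vanishes iff `α ≤ ℙ(X ≤ t)` and the second
iff `ℙ(X < t) ≤ α`.
-/

open MeasureTheory Set

/-- Left Expected Shortfall of `X` at level `α ∈ (0,1]`; the value at `α = 0` is junk, but it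
is only ever used multiplied by `α = 0`, implementing the convention `0 · x = 0`. -/
noncomputable def ESminus {Ω : Type*} [MeasurableSpace Ω] (μ : Measure Ω) (X : Ω → ℝ)
    (α : ℝ) : ℝ :=
  α⁻¹ * ∫ β in Set.Ioo 0 α, VaR μ X β

open Filter Topology ProbabilityTheory

/-- The left quantile function of a measure on `ℝ`; only its values on `(0, 1)` are meaningful. -/
noncomputable def quantile (ν : Measure ℝ) (β : ℝ) : ℝ := sInf {s | β ≤ cdf ν s}

section Quantile

variable {ν : Measure ℝ} {β s t : ℝ}

lemma bddBelow_setOf_le_cdf (hβ : 0 < β) : BddBelow {s | β ≤ cdf ν s} := by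
  obtain ⟨b, hb⟩ := eventually_atBot.1 ((tendsto_cdf_atBot ν).eventually (eventually_lt_nhds hβ))
  exact ⟨b, fun s hs => le_of_not_ge fun hsb => (hb s hsb).not_ge hs⟩

lemma nonempty_setOf_le_cdf (hβ : β < 1) : {s | β ≤ cdf ν s}.Nonempty :=
  (((tendsto_cdf_atTop ν).eventually (eventually_gt_nhds hβ)).exists).imp fun _ => le_of_lt

lemma le_cdf_quantile (hβ : β ∈ Ioo 0 1) : β ≤ cdf ν (quantile ν β) := by
  have h : ∀ s > quantile ν β, β ≤ cdf ν s := fun s hs => by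
    obtain ⟨r, hr, hrs⟩ := exists_lt_of_csInf_lt (nonempty_setOf_le_cdf hβ.2) hs
    exact hr.trans (monotone_cdf ν hrs.le)
  exact ge_of_tendsto (((cdf ν).right_continuous _).mono Ioi_subset_Ici_self)
    (eventually_nhdsWithin_of_forall h)

lemma quantile_le_iff (hβ : β ∈ Ioo 0 1) : quantile ν β ≤ s ↔ β ≤ cdf ν s :=
  ⟨fun h => (le_cdf_quantile hβ).trans (monotone_cdf ν h),
    fun h => csInf_le (bddBelow_setOf_le_cdf hβ.1) h⟩

lemma monotoneOn_quantile : MonotoneOn (quantile ν) (Ioo 0 1) := fun _ hβ _ hγ hle =>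
  csInf_le_csInf (bddBelow_setOf_le_cdf hβ.1) (nonempty_setOf_le_cdf hγ.2) fun _ hs => hle.trans hs

lemma aemeasurable_quantile : AEMeasurable (quantile ν) (volume.restrict (Ioo 0 1)) :=
  aemeasurable_restrict_of_monotoneOn measurableSet_Ioo monotoneOn_quantile

variable [IsProbabilityMeasure ν]

lemma measureReal_Iio_eq_leftLim_cdf (t : ℝ) : ν.real (Iio t) = Function.leftLim (cdf ν) t := by
  have hnonneg : 0 ≤ Function.leftLim (cdf ν) t :=
    (cdf_nonneg ν (t - 1)).trans ((monotone_cdf ν).le_leftLim (sub_one_lt t))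
  conv_lhs => rw [measureReal_def, ← measure_cdf ν]
  rw [(cdf ν).measure_Iio (tendsto_cdf_atBot ν), sub_zero, ENNReal.toReal_ofReal hnonneg]

lemma quantile_lt_of_lt_measureReal_Iio (hβ : β ∈ Ioo 0 1) (h : β < ν.real (Iio t)) :
    quantile ν β < t := by
  rw [measureReal_Iio_eq_leftLim_cdf] at h
  obtain ⟨s, hβs, hst⟩ := ((((monotone_cdf ν).tendsto_leftLim t).eventually
    (eventually_gt_nhds h)).and self_mem_nhdsWithin).exists
  exact ((quantile_le_iff hβ).2 hβs.le).trans_lt hst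

lemma le_measureReal_Iio_of_quantile_lt (hβ : β ∈ Ioo 0 1) (h : quantile ν β < t) :
    β ≤ ν.real (Iio t) :=
  calc β ≤ cdf ν (quantile ν β) := le_cdf_quantile hβ
    _ = ν.real (Iic (quantile ν β)) := cdf_eq_real ν _
    _ ≤ ν.real (Iio t) := measureReal_mono (Iic_subset_Iio.2 h)

lemma volume_Ioo_inter_Iic {c : ℝ} (hc : c ≤ 1) : volume (Ioo 0 1 ∩ Iic c) = ENNReal.ofReal c := by
  have hsub : Ioo 0 1 ∩ Iic c ⊆ Ioc 0 c := fun x hx => ⟨hx.1.1, hx.2⟩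
  have hsup : Ioo 0 c ⊆ Ioo 0 1 ∩ Iic c := fun x hx => ⟨⟨hx.1, hx.2.trans_le hc⟩, hx.2.le⟩
  refine le_antisymm ?_ ?_
  · simpa using measure_mono (μ := volume) hsub
  · simpa using measure_mono (μ := volume) hsup

theorem map_restrict_quantile : (volume.restrict (Ioo 0 1)).map (quantile ν) = ν := by
  refine Measure.ext_of_Iic _ _ fun s => ?_
  have hpre : quantile ν ⁻¹' Iic s ∩ Ioo 0 1 = Ioo 0 1 ∩ Iic (cdf ν s) := by
    ext β
    simp only [mem_inter_iff, mem_preimage, mem_Iic]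
    exact ⟨fun h => ⟨h.2, (quantile_le_iff h.2).1 h.1⟩, fun h => ⟨(quantile_le_iff h.1).2 h.2, h.1⟩⟩
  rw [Measure.map_apply_of_aemeasurable aemeasurable_quantile measurableSet_Iic,
    Measure.restrict_apply' measurableSet_Ioo, hpre, volume_Ioo_inter_Iic (cdf_le_one ν s),
    ofReal_cdf]

lemma integral_comp_quantile {f : ℝ → ℝ} (hf : AEStronglyMeasurable f ν) :
    ∫ β in Ioc 0 1, f (quantile ν β) = ∫ x, f x ∂ν := by
  rw [← setIntegral_congr_set Ioo_ae_eq_Ioc]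
  conv_rhs => rw [← map_restrict_quantile (ν := ν)]
  exact (integral_map aemeasurable_quantile (by rwa [map_restrict_quantile])).symm

lemma integrableOn_comp_quantile {f : ℝ → ℝ} (hf : Integrable f ν) :
    IntegrableOn (fun β => f (quantile ν β)) (Ioc 0 1) := by
  rw [IntegrableOn, ← Measure.restrict_congr_set Ioo_ae_eq_Ioc]
  rw [← map_restrict_quantile (ν := ν)] at hf
  exact (integrable_map_measure hf.aestronglyMeasurable aemeasurable_quantile).1 hf

end Quantile

lemma setIntegral_pos_of_Ioc_subset {f : ℝ → ℝ} {s : Set ℝ} {a b : ℝ} (hab : a < b)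
    (hsub : Ioc a b ⊆ s) (hf : IntegrableOn f s) (hf0 : 0 ≤ᵐ[volume.restrict s] f)
    (hpos : ∀ x ∈ Ioo a b, 0 < f x) : 0 < ∫ x in s, f x :=
  calc 0 < ∫ x in a..b, f x := intervalIntegral.intervalIntegral_pos_of_pos_on
        ((intervalIntegrable_iff_integrableOn_Ioc_of_le hab.le).2 (hf.mono_set hsub)) hpos hab
    _ = ∫ x in Ioc a b, f x := intervalIntegral.integral_of_le hab.le
    _ ≤ ∫ x in s, f x := setIntegral_mono_set hf hf0 hsub.eventuallyLE

lemma setIntegral_add_mul_eq_integral_min_add {q : ℝ → ℝ} {α t : ℝ}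
    (hq : IntegrableOn q (Ioc 0 1)) (hα : α ∈ Icc 0 1) :
    (∫ β in Ioc 0 α, q β) + (1 - α) * t =
      (∫ β in Ioc 0 1, min (q β) t) + (∫ β in Ioc 0 α, q β - min (q β) t)
        + ∫ β in Ioc α 1, t - min (q β) t := by
  have hmin : IntegrableOn (fun β => min (q β) t) (Ioc 0 1) :=
    hq.inf (integrableOn_const measure_Ioc_lt_top.ne)
  have h0α : Ioc 0 α ⊆ Ioc 0 1 := Ioc_subset_Ioc_right hα.2
  have hα1 : Ioc α 1 ⊆ Ioc 0 1 := Ioc_subset_Ioc_left hα.1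
  have hconst : (1 - α) * t = ∫ _ in Ioc α 1, t := by
    rw [setIntegral_const, Real.volume_real_Ioc_of_le hα.2, smul_eq_mul]
  rw [← Ioc_union_Ioc_eq_Ioc hα.1 hα.2, setIntegral_union (Ioc_disjoint_Ioc_of_le le_rfl)
      measurableSet_Ioc (hmin.mono_set h0α) (hmin.mono_set hα1),
    integral_sub (hq.mono_set h0α) (hmin.mono_set h0α), hconst,
    integral_sub (integrableOn_const (C := t) measure_Ioc_lt_top.ne) (hmin.mono_set hα1)]
  ring

section QuantileExcess

variable {ν : Measure ℝ} [IsProbabilityMeasure ν] {α t : ℝ}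

lemma setIntegral_quantile_sub_min_eq_zero_iff (hq : IntegrableOn (quantile ν) (Ioc 0 1))
    (hα : α ∈ Icc 0 1) :
    ∫ β in Ioc 0 α, quantile ν β - min (quantile ν β) t = 0 ↔ α ≤ ν.real (Iic t) := by
  have hle : ∀ β ∈ Ioo 0 1, quantile ν β ≤ t ↔ β ≤ ν.real (Iic t) := fun β hβ => by
    rw [quantile_le_iff hβ, cdf_eq_real]
  constructor
  · intro h
    by_contra! hRα
    have hsub : Ioc (ν.real (Iic t)) α ⊆ Ioc 0 α := Ioc_subset_Ioc_left measureReal_nonneg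
    have hint : IntegrableOn (fun β => quantile ν β - min (quantile ν β) t) (Ioc 0 α) :=
      (hq.sub (hq.inf (integrableOn_const measure_Ioc_lt_top.ne))).mono_set
        (Ioc_subset_Ioc_right hα.2)
    refine h.not_gt (setIntegral_pos_of_Ioc_subset hRα hsub hint
      (ae_of_all _ fun β => sub_nonneg.2 (min_le_left _ _)) fun β hβ => ?_)
    have hβ01 : β ∈ Ioo 0 1 := ⟨measureReal_nonneg.trans_lt hβ.1, hβ.2.trans_le hα.2⟩
    have htq : t < quantile ν β := not_le.1 fun h => (hle β hβ01).1 h |>.not_gt hβ.1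
    exact sub_pos.2 (min_lt_iff.2 (Or.inr htq))
  · intro hαR
    rw [← setIntegral_congr_set Ioo_ae_eq_Ioc]
    refine setIntegral_eq_zero_of_forall_eq_zero fun β hβ => ?_
    rw [min_eq_left ((hle β ⟨hβ.1, hβ.2.trans_le hα.2⟩).2 (hβ.2.le.trans hαR)), sub_self]

lemma setIntegral_sub_min_quantile_eq_zero_iff (hq : IntegrableOn (quantile ν) (Ioc 0 1))
    (hα : α ∈ Icc 0 1) :
    ∫ β in Ioc α 1, t - min (quantile ν β) t = 0 ↔ ν.real (Iio t) ≤ α := by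
  constructor
  · intro h
    by_contra! hαL
    have hsub : Ioc α (ν.real (Iio t)) ⊆ Ioc α 1 := Ioc_subset_Ioc_right measureReal_le_one
    have hint : IntegrableOn (fun β => t - min (quantile ν β) t) (Ioc α 1) :=
      ((integrableOn_const measure_Ioc_lt_top.ne).sub
        (hq.inf (integrableOn_const measure_Ioc_lt_top.ne))).mono_set (Ioc_subset_Ioc_left hα.1)
    refine h.not_gt (setIntegral_pos_of_Ioc_subset hαL hsub hint
      (ae_of_all _ fun β => sub_nonneg.2 (min_le_right _ _)) fun β hβ => ?_)
    have hβ01 : β ∈ Ioo 0 1 := ⟨hα.1.trans_lt hβ.1, hβ.2.trans_le measureReal_le_one⟩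
    exact sub_pos.2 (min_lt_iff.2 (Or.inl (quantile_lt_of_lt_measureReal_Iio hβ01 hβ.2)))
  · intro hLα
    rw [← setIntegral_congr_set Ioo_ae_eq_Ioc]
    refine setIntegral_eq_zero_of_forall_eq_zero fun β hβ => ?_
    have hβ01 : β ∈ Ioo 0 1 := ⟨hα.1.trans_lt hβ.1, hβ.2⟩
    have htq : t ≤ quantile ν β := not_lt.1 fun h =>
      (le_measureReal_Iio_of_quantile_lt hβ01 h).not_gt (hLα.trans_lt hβ.1)
    rw [min_eq_right htq, sub_self]

end QuantileExcess

section Objective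

variable {ν : Measure ℝ} [IsProbabilityMeasure ν] {α : ℝ}

lemma setIntegral_quantile_add_mul_eq (hν : Integrable id ν) (t : ℝ)
    (hα : α ∈ Icc 0 1) :
    (∫ β in Ioc 0 α, quantile ν β) + (1 - α) * t =
      ∫ x, min x t ∂ν + ((∫ β in Ioc 0 α, quantile ν β - min (quantile ν β) t)
        + ∫ β in Ioc α 1, t - min (quantile ν β) t) := by
  rw [setIntegral_add_mul_eq_integral_min_add (q := quantile ν) (integrableOn_comp_quantile hν) hα,
    integral_comp_quantile (f := fun x => min x t) (by fun_prop), add_assoc]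

lemma integral_min_le_setIntegral_quantile_add_mul (hν : Integrable id ν) (t : ℝ)
    (hα : α ∈ Icc 0 1) :
    ∫ x, min x t ∂ν ≤ (∫ β in Ioc 0 α, quantile ν β) + (1 - α) * t := by
  rw [setIntegral_quantile_add_mul_eq hν t hα, le_add_iff_nonneg_right]
  exact add_nonneg (setIntegral_nonneg measurableSet_Ioc fun β _ => sub_nonneg.2 (min_le_left _ _))
    (setIntegral_nonneg measurableSet_Ioc fun β _ => sub_nonneg.2 (min_le_right _ _))

lemma setIntegral_quantile_add_mul_eq_integral_min_iff (hν : Integrable id ν) (t : ℝ)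
    (hα : α ∈ Icc 0 1) :
    (∫ β in Ioc 0 α, quantile ν β) + (1 - α) * t = ∫ x, min x t ∂ν ↔
      α ∈ Icc (ν.real (Iio t)) (ν.real (Iic t)) := by
  have hq : IntegrableOn (quantile ν) (Ioc 0 1) := integrableOn_comp_quantile hν
  rw [setIntegral_quantile_add_mul_eq hν t hα, add_eq_left,
    add_eq_zero_iff_of_nonneg
      (setIntegral_nonneg measurableSet_Ioc fun β _ => sub_nonneg.2 (min_le_left _ _))
      (setIntegral_nonneg measurableSet_Ioc fun β _ => sub_nonneg.2 (min_le_right _ _)),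
    setIntegral_quantile_sub_min_eq_zero_iff hq hα, setIntegral_sub_min_quantile_eq_zero_iff hq hα,
    mem_Icc, and_comm]

end Objective

lemma VaR_eq_quantile {Ω : Type*} [MeasurableSpace Ω] {μ : Measure Ω} [IsProbabilityMeasure μ]
    {X : Ω → ℝ} (hX : AEMeasurable X μ) : VaR μ X = quantile (μ.map X) := by
  have := Measure.isProbabilityMeasure_map hX
  ext β
  refine congrArg sInf (Set.ext fun s => ?_)
  have hs : μ {ω | X ω ≤ s} = μ.map X (Iic s) :=
    (Measure.map_apply_of_aemeasurable hX measurableSet_Iic).symm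
  change _ ≤ μ {ω | X ω ≤ s} ↔ β ≤ cdf (μ.map X) s
  rw [hs, ← ofReal_cdf, ENNReal.ofReal_le_ofReal_iff (cdf_nonneg _ _)]

lemma mul_ESminus_eq_integral_VaR {Ω : Type*} [MeasurableSpace Ω] (μ : Measure Ω) (X : Ω → ℝ)
    {α : ℝ} (hα : 0 ≤ α) : α * ESminus μ X α = ∫ β in Ioc 0 α, VaR μ X β := by
  rcases hα.eq_or_lt with rfl | hα
  · simp
  · rw [ESminus, ← mul_assoc, mul_inv_cancel₀ hα.ne', one_mul, setIntegral_congr_set Ioo_ae_eq_Ioc]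

theorem expectation_min_eq_min_left_ES_general {Ω : Type*} [MeasurableSpace Ω] (μ : Measure Ω)
    [IsProbabilityMeasure μ] (X : Ω → ℝ)
    (hXint : Integrable X μ) (t : ℝ) :
    IsLeast {y : ℝ | ∃ α ∈ Set.Icc (0 : ℝ) 1, y = α * ESminus μ X α + (1 - α) * t}
        (∫ ω, min (X ω) t ∂μ) ∧
      {α ∈ Set.Icc (0 : ℝ) 1 | α * ESminus μ X α + (1 - α) * t = ∫ ω, min (X ω) t ∂μ}
        = Set.Icc (μ {ω | X ω < t}).toReal (μ {ω | X ω ≤ t}).toReal := by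
  have hX := hXint.aemeasurable
  set ν := μ.map X
  have := Measure.isProbabilityMeasure_map hX
  have hν : Integrable id ν := (integrable_map_measure aestronglyMeasurable_id hX).2 hXint
  have hobj : ∀ α ∈ Icc (0 : ℝ) 1,
      α * ESminus μ X α + (1 - α) * t = (∫ β in Ioc 0 α, quantile ν β) + (1 - α) * t :=
    fun α hα => by rw [mul_ESminus_eq_integral_VaR μ X hα.1, VaR_eq_quantile hX]
  have hE : ∫ ω, min (X ω) t ∂μ = ∫ x, min x t ∂ν :=
    (integral_map (f := fun x => min x t) hX (by fun_prop)).symm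
  have hL : (μ {ω | X ω < t}).toReal = ν.real (Iio t) := by
    rw [measureReal_def, Measure.map_apply_of_aemeasurable hX measurableSet_Iio]; rfl
  have hR : (μ {ω | X ω ≤ t}).toReal = ν.real (Iic t) := by
    rw [measureReal_def, Measure.map_apply_of_aemeasurable hX measurableSet_Iic]; rfl
  have hLR : ν.real (Iio t) ≤ ν.real (Iic t) := measureReal_mono Iio_subset_Iic_self
  have hR01 : ν.real (Iic t) ∈ Icc (0 : ℝ) 1 := ⟨measureReal_nonneg, measureReal_le_one⟩
  refine ⟨⟨⟨ν.real (Iic t), hR01, ?_⟩, ?_⟩, Set.ext fun α => ?_⟩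
  · rw [hobj _ hR01, hE,
      (setIntegral_quantile_add_mul_eq_integral_min_iff hν t hR01).2 ⟨hLR, le_rfl⟩]
  · rintro _ ⟨α, hα, rfl⟩
    rw [hobj α hα, hE]
    exact integral_min_le_setIntegral_quantile_add_mul hν t hα
  · rw [hL, hR]
    refine ⟨fun ⟨hα, h⟩ => ?_, fun h => ?_⟩
    · rwa [hobj α hα, hE, setIntegral_quantile_add_mul_eq_integral_min_iff hν t hα] at h
    · have hα : α ∈ Icc (0 : ℝ) 1 := ⟨measureReal_nonneg.trans h.1, h.2.trans measureReal_le_one⟩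
      refine ⟨hα, ?_⟩
      rwa [hobj α hα, hE, setIntegral_quantile_add_mul_eq_integral_min_iff hν t hα]

/-- For an integrable random variable `X` on an atomless probability space and any `t ∈ ℝ`,
`E[min(X, t)] = min over α ∈ [0,1] of { α ES⁻_α(X) + (1-α) t }`, the minimum is attained,
and the set of minimizers is exactly `[ℙ(X < t), ℙ(X ≤ t)]`. -/
theorem expectation_min_eq_min_left_ES {Ω : Type*} [MeasurableSpace Ω] (μ : Measure Ω)
    [IsProbabilityMeasure μ] (hμ : Atomless μ) (X : Ω → ℝ)
    (hXmeas : Measurable X) (hXint : Integrable X μ) (t : ℝ) :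
    IsLeast {y : ℝ | ∃ α ∈ Set.Icc (0 : ℝ) 1, y = α * ESminus μ X α + (1 - α) * t}
        (∫ ω, min (X ω) t ∂μ) ∧
      {α ∈ Set.Icc (0 : ℝ) 1 | α * ESminus μ X α + (1 - α) * t = ∫ ω, min (X ω) t ∂μ}
        = Set.Icc (μ {ω | X ω < t}).toReal (μ {ω | X ω ≤ t}).toReal :=
  expectation_min_eq_min_left_ES_general μ X hXint t
end

section
/- Let v : ℝ → ℝ be increasing and convex with v(0) = 0, v̄ := sup_x v'_+(x) ≥ 1 (possibly +∞), and v'_+(−t) → 0 as t → ∞. Let X be an essentially bounded random variable and define f(t) = E[v(X + t)] for t ∈ ℝ and its Fenchel–Legendre conjugate f*(β) = sup_{t ∈ ℝ} { tβ − f(t) }. Then: f*(β) = +∞ for β < 0 and for β > v̄; f*(β) = −β·R^v_β(X) for every β ∈ (0, v̄]; and limsup as β ↓ 0 of f*(β) is at most f*(0). -/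
open MeasureTheory Set Filter

/-- The right derivative of a convex function `v` at `x`, as the infimum of slopes to the
right of `x`. -/
noncomputable def rightDeriv (v : ℝ → ℝ) (x : ℝ) : ℝ :=
  sInf ((fun y => (v y - v x) / (y - x)) '' Set.Ioi x)

/-- `v̄ = sup_{x ∈ ℝ} v'_+(x)`, valued in `[0, ∞]`. -/
noncomputable def slopeSup (v : ℝ → ℝ) : ENNReal :=
  ⨆ x : ℝ, ENNReal.ofReal (rightDeriv v x)

/-- The optimized certainty equivalent `R^v_β(X) = inf_{s ∈ ℝ} { s + (1/β) E[v(X - s)] }`,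
for `β ∈ (0, ∞]`, valued in the extended reals. -/
noncomputable def OCE {Ω : Type*} [MeasurableSpace Ω] (μ : Measure Ω) (X : Ω → ℝ)
    (v : ℝ → ℝ) (β : ENNReal) : EReal :=
  sInf {y : EReal | ∃ s : ℝ, y = ((s + (β⁻¹).toReal * ∫ ω, v (X ω - s) ∂μ : ℝ) : EReal)}

/-- The Fenchel–Legendre conjugate `f*(β) = sup_{t ∈ ℝ} { tβ - f(t) }` of
`f(t) = E[v(X + t)]`, valued in `(-∞, +∞]` (as an extended real). -/
noncomputable def fStar {Ω : Type*} [MeasurableSpace Ω] (μ : Measure Ω) (X : Ω → ℝ)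
    (v : ℝ → ℝ) (β : ℝ) : EReal :=
  ⨆ t : ℝ, ((t * β - ∫ ω, v (X ω + t) ∂μ : ℝ) : EReal)

section helpers
variable {v : ℝ → ℝ} (hv_mono : Monotone v) (hv_conv : ConvexOn ℝ Set.univ v)

lemma slope_set_nonempty (x : ℝ) :
    ((fun y => (v y - v x) / (y - x)) '' Set.Ioi x).Nonempty :=
  ⟨_, ⟨x + 1, by simp, rfl⟩⟩

include hv_mono in
lemma slope_set_bddBelow (x : ℝ) :
    BddBelow ((fun y => (v y - v x) / (y - x)) '' Set.Ioi x) := by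
  refine ⟨0, ?_⟩
  rintro b ⟨z, hz, rfl⟩
  have hz' : x < z := hz
  exact div_nonneg (sub_nonneg.2 (hv_mono hz'.le)) (sub_nonneg.2 hz'.le)

include hv_mono in
lemma rightDeriv_nonneg (x : ℝ) : 0 ≤ rightDeriv v x := by
  refine le_csInf (slope_set_nonempty x) ?_
  rintro b ⟨z, hz, rfl⟩
  have hz' : x < z := hz
  exact div_nonneg (sub_nonneg.2 (hv_mono hz'.le)) (sub_nonneg.2 hz'.le)

include hv_mono in
lemma rightDeriv_le_slope {x y : ℝ} (hxy : x < y) :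
    rightDeriv v x ≤ (v y - v x) / (y - x) :=
  csInf_le (slope_set_bddBelow hv_mono x) ⟨y, hxy, rfl⟩

include hv_conv in
lemma slope_le_rightDeriv {x y : ℝ} (hyx : y < x) :
    (v x - v y) / (x - y) ≤ rightDeriv v x := by
  refine le_csInf (slope_set_nonempty x) ?_
  rintro b ⟨z, hz, rfl⟩
  exact hv_conv.slope_mono_adjacent (mem_univ y) (mem_univ z) hyx hz

include hv_mono hv_conv in
lemma rightDeriv_subgradient (x y : ℝ) :
    v x + rightDeriv v x * (y - x) ≤ v y := by
  rcases lt_trichotomy y x with h | h | h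
  · have := slope_le_rightDeriv hv_conv h
    rw [div_le_iff₀ (by linarith)] at this
    nlinarith
  · simp [h]
  · have := rightDeriv_le_slope hv_mono h
    rw [le_div_iff₀ (by linarith)] at this
    nlinarith

end helpers

/-- Properties of the conjugate of `f(t) = E[v(X + t)]`: it is `+∞` for `β < 0` and for
`β > v̄`; it equals `-β R^v_β(X)` for `β ∈ (0, v̄]`; and `limsup_{β ↓ 0} f*(β) ≤ f*(0)`. -/
theorem conjugate_of_OCE {Ω : Type*} [MeasurableSpace Ω] (μ : Measure Ω)
    [IsProbabilityMeasure μ] (hμ : Atomless μ)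
    (v : ℝ → ℝ) (hv_mono : Monotone v) (hv_conv : ConvexOn ℝ Set.univ v) (hv0 : v 0 = 0)
    (hvbar : 1 ≤ slopeSup v)
    (hvlim : Tendsto (fun s : ℝ => rightDeriv v (-s)) atTop (nhds 0))
    (X : Ω → ℝ) (hXmeas : Measurable X) (hXbdd : MemLp X ⊤ μ) :
    (∀ β : ℝ, β < 0 → fStar μ X v β = ⊤) ∧
    (∀ β : ℝ, slopeSup v < ENNReal.ofReal β → fStar μ X v β = ⊤) ∧
    (∀ β : ℝ, 0 < β → ENNReal.ofReal β ≤ slopeSup v →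
      fStar μ X v β = -((β : EReal) * OCE μ X v (ENNReal.ofReal β))) ∧
    Filter.limsup (fun β : ℝ => fStar μ X v β) (nhdsWithin 0 (Set.Ioi 0)) ≤ fStar μ X v 0 := by
  -- essential bound for X
  set M : ℝ := (eLpNormEssSup X μ).toReal with hMdef
  have hMfin : eLpNormEssSup X μ < ⊤ := by
    have := hXbdd.2
    rwa [eLpNorm_exponent_top] at this
  have hMae : ∀ᵐ ω ∂μ, |X ω| ≤ M := by
    filter_upwards [MeasureTheory.ae_le_eLpNormEssSup (f := X) (μ := μ)] with ω hω
    have h1 : ((‖X ω‖₊ : ENNReal)).toReal ≤ M :=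
      ENNReal.toReal_mono hMfin.ne hω
    simpa [Real.norm_eq_abs] using h1
  -- integrability
  have hint : ∀ t : ℝ, Integrable (fun ω => v (X ω + t)) μ := by
    intro t
    refine Integrable.mono' (integrable_const (max |v (-M + t)| |v (M + t)|))
      ((hv_mono.measurable.comp (hXmeas.add_const t)).aestronglyMeasurable) ?_
    filter_upwards [hMae] with ω hω
    rw [Real.norm_eq_abs]
    have h1 : v (-M + t) ≤ v (X ω + t) := hv_mono (by have := abs_le.1 hω; linarith)
    have h2 : v (X ω + t) ≤ v (M + t) := hv_mono (by have := abs_le.1 hω; linarith)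
    exact abs_le_max_abs_abs h1 h2
  have hintX : Integrable X μ := hXbdd.integrable le_top
  -- upper bound on f(t)
  have hub : ∀ t : ℝ, ∫ ω, v (X ω + t) ∂μ ≤ v (M + t) := by
    intro t
    calc ∫ ω, v (X ω + t) ∂μ ≤ ∫ _ω, v (M + t) ∂μ := by
          refine integral_mono_ae (hint t) (integrable_const _) ?_
          filter_upwards [hMae] with ω hω
          exact hv_mono (by have := abs_le.1 hω; linarith)
      _ = v (M + t) := by simp
  refine ⟨?_, ?_, ?_, ?_⟩
  · -- Part 1 : β < 0
    intro β hβ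
    rw [fStar, iSup_eq_top]
    intro b hb
    obtain ⟨r, hbr, -⟩ := EReal.lt_iff_exists_real_btwn.1 hb
    set t : ℝ := min 0 ((r + v M + 1) / β) with htdef
    refine ⟨t, lt_of_lt_of_le hbr ?_⟩
    rw [EReal.coe_le_coe_iff]
    have ht0 : t ≤ 0 := min_le_left _ _
    have ht1 : t ≤ (r + v M + 1) / β := min_le_right _ _
    have htβ : r + v M + 1 ≤ t * β := by
      rw [le_div_iff_of_neg hβ] at ht1
      linarith
    have h2 : v (M + t) ≤ v M := hv_mono (by linarith)
    have := hub t
    linarith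
  · -- Part 2 : β > v̄
    intro β hβ
    have hfin : slopeSup v ≠ ⊤ := hβ.trans_le le_top |>.ne
    set V : ℝ := (slopeSup v).toReal with hVdef
    have hβpos : 0 < β := by
      by_contra h
      push_neg at h
      rw [ENNReal.ofReal_eq_zero.2 h] at hβ
      exact absurd hβ (by simp)
    have hVβ : V < β := by
      have := ENNReal.toReal_strict_mono (by simp) hβ
      rwa [ENNReal.toReal_ofReal hβpos.le] at this
    have hvle : ∀ x : ℝ, rightDeriv v x ≤ V := by
      intro x
      have h1 : ENNReal.ofReal (rightDeriv v x) ≤ slopeSup v :=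
        le_iSup (fun x => ENNReal.ofReal (rightDeriv v x)) x
      have h2 := ENNReal.toReal_mono hfin h1
      rwa [ENNReal.toReal_ofReal (rightDeriv_nonneg hv_mono x)] at h2
    have hlin : ∀ x : ℝ, 0 < x → v x ≤ V * x := by
      intro x hx
      have h1 : (v x - v 0) / (x - 0) ≤ rightDeriv v x := slope_le_rightDeriv hv_conv hx
      rw [hv0, sub_zero, sub_zero, div_le_iff₀ hx] at h1
      nlinarith [hvle x]
    rw [fStar, iSup_eq_top]
    intro b hb
    obtain ⟨r, hbr, -⟩ := EReal.lt_iff_exists_real_btwn.1 hb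
    set t : ℝ := max (1 - M) ((r + V * M + 1) / (β - V)) with htdef
    refine ⟨t, lt_of_lt_of_le hbr ?_⟩
    rw [EReal.coe_le_coe_iff]
    have ht0 : 1 - M ≤ t := le_max_left _ _
    have ht1 : (r + V * M + 1) / (β - V) ≤ t := le_max_right _ _
    have htβ : r + V * M + 1 ≤ t * (β - V) := by
      rw [div_le_iff₀ (by linarith)] at ht1
      linarith
    have hMt : 0 < M + t := by
      have : (0:ℝ) ≤ M := ENNReal.toReal_nonneg
      linarith
    have h2 : v (M + t) ≤ V * (M + t) := hlin _ hMt
    have := hub t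
    nlinarith
  · -- Part 3 : equality
    intro β hβ hβle
    have h1 : ((ENNReal.ofReal β)⁻¹).toReal = β⁻¹ := by
      rw [ENNReal.toReal_inv, ENNReal.toReal_ofReal hβ.le]
    have hβ0 : (β:ℝ) ≠ 0 := hβ.ne'
    set g : ℝ → ℝ := fun s => s + β⁻¹ * ∫ ω, v (X ω - s) ∂μ with hgdef
    have hS : {y : EReal | ∃ s : ℝ,
        y = ((s + ((ENNReal.ofReal β)⁻¹).toReal * ∫ ω, v (X ω - s) ∂μ : ℝ) : EReal)}
        = {y : EReal | ∃ s : ℝ, y = ((g s : ℝ) : EReal)} := by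
      simp only [h1, hgdef]
    have hpt : ∀ t : ℝ, (t * β - ∫ ω, v (X ω + t) ∂μ : ℝ) = -β * g (-t) := by
      intro t
      have : ∫ ω, v (X ω - -t) ∂μ = ∫ ω, v (X ω + t) ∂μ := by
        simp only [sub_neg_eq_add]
      simp only [hgdef, this]
      field_simp
      ring
    rw [fStar, OCE, hS]
    simp only [hpt]
    set I : EReal := sInf {y : EReal | ∃ s : ℝ, y = ((g s : ℝ) : EReal)} with hIdef
    have hβE : (0:EReal) ≤ (β : EReal) := by exact_mod_cast hβ.le
    apply le_antisymm
    · refine iSup_le fun t => ?_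
      have hI : I ≤ ((g (-t) : ℝ) : EReal) := sInf_le ⟨-t, rfl⟩
      have : ((-β * g (-t) : ℝ) : EReal) = -((β : EReal) * ((g (-t) : ℝ) : EReal)) := by
        rw [← EReal.coe_mul, ← EReal.coe_neg]
        norm_num
      rw [this]
      exact EReal.neg_le_neg_iff.2 (mul_le_mul_of_nonneg_left hI hβE)
    · set S : EReal := ⨆ t : ℝ, ((-β * g (-t) : ℝ) : EReal) with hSdef
      rcases eq_top_or_lt_top S with hStop | hSlt
      · rw [hStop]; exact le_top
      have hSbot : S ≠ ⊥ := by
        refine ne_bot_of_le_ne_bot ?_ (le_iSup (fun t => ((-β * g (-t) : ℝ) : EReal)) 0)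
        exact EReal.coe_ne_bot _
      obtain ⟨rS, hrS⟩ : ∃ r : ℝ, S = (r : EReal) := ⟨S.toReal, (EReal.coe_toReal hSlt.ne hSbot).symm⟩
      have hge : ∀ s : ℝ, -β * g s ≤ rS := by
        intro s
        have h2 := le_iSup (fun t : ℝ => ((-β * g (-t) : ℝ) : EReal)) (-s)
        rw [← hSdef, hrS] at h2
        simp only [neg_neg] at h2
        exact_mod_cast h2
      have hIlb : ((-rS / β : ℝ) : EReal) ≤ I := by
        refine le_sInf ?_
        rintro y ⟨s, rfl⟩
        rw [EReal.coe_le_coe_iff, div_le_iff₀ hβ]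
        nlinarith [hge s]
      have h3 : ((-rS : ℝ) : EReal) ≤ (β : EReal) * I := by
        calc ((-rS : ℝ) : EReal) = (β : EReal) * ((-rS / β : ℝ) : EReal) := by
              rw [← EReal.coe_mul]
              congr 1
              field_simp
          _ ≤ (β : EReal) * I := mul_le_mul_of_nonneg_left hIlb hβE
      calc -((β : EReal) * I) ≤ -((-rS : ℝ) : EReal) := EReal.neg_le_neg_iff.2 h3
        _ = ((rS : ℝ) : EReal) := by rw [EReal.coe_neg, neg_neg]
        _ = S := hrS.symm
  · -- Part 4 : limsup
    by_cases htop : fStar μ X v 0 = ⊤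
    · rw [htop]; exact le_top
    have hbot : fStar μ X v 0 ≠ ⊥ := by
      have h2 : ((0 * (0:ℝ) - ∫ ω, v (X ω + 0) ∂μ : ℝ) : EReal) ≤ fStar μ X v 0 := by
        rw [fStar]
        exact le_iSup (fun t : ℝ => ((t * (0:ℝ) - ∫ ω, v (X ω + t) ∂μ : ℝ) : EReal)) 0
      exact ne_bot_of_le_ne_bot (EReal.coe_ne_bot _) h2
    obtain ⟨r0, hr0⟩ : ∃ r : ℝ, fStar μ X v 0 = (r : EReal) :=
      ⟨_, (EReal.coe_toReal htop hbot).symm⟩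
    have hr0ge : ∀ t : ℝ, -(∫ ω, v (X ω + t) ∂μ) ≤ r0 := by
      intro t
      have h2 : ((t * (0:ℝ) - ∫ ω, v (X ω + t) ∂μ : ℝ) : EReal) ≤ fStar μ X v 0 := by
        rw [fStar]
        exact le_iSup (fun t : ℝ => ((t * (0:ℝ) - ∫ ω, v (X ω + t) ∂μ : ℝ) : EReal)) t
      rw [hr0, EReal.coe_le_coe_iff] at h2
      linarith
    obtain ⟨x₀, hx₀⟩ : ∃ x : ℝ, 0 < rightDeriv v x := by
      by_contra h
      push_neg at h
      have hzero : slopeSup v = 0 := by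
        rw [slopeSup]
        refine le_antisymm (iSup_le fun x => ?_) zero_le
        simp [ENNReal.ofReal_eq_zero.2 (h x)]
      rw [hzero] at hvbar
      simp at hvbar
    set δ := rightDeriv v x₀ with hδdef
    set a : ℝ := v x₀ - δ * x₀ with hadef
    have hva : ∀ y : ℝ, δ * y + a ≤ v y := by
      intro y
      have h2 := rightDeriv_subgradient hv_mono hv_conv x₀ y
      rw [hadef]
      nlinarith
    set EX : ℝ := ∫ ω, X ω ∂μ with hEX
    have hlow : ∀ t : ℝ, δ * EX + δ * t + a ≤ ∫ ω, v (X ω + t) ∂μ := by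
      intro t
      have h2 : ∫ ω, (δ * X ω + (δ * t + a)) ∂μ ≤ ∫ ω, v (X ω + t) ∂μ := by
        refine integral_mono ((hintX.const_mul δ).add (integrable_const _)) (hint t)
          fun ω => ?_
        have := hva (X ω + t)
        nlinarith
      rw [integral_add (hintX.const_mul δ) (integrable_const _), integral_const_mul,
        integral_const] at h2
      simp only [probReal_univ, measure_univ, ENNReal.toReal_one, one_smul] at h2
      linarith
    set B : ℝ → ℝ := fun β => (β / δ) * (-(δ * EX + a)) + (1 - β / δ) * r0 with hBdef
    have key : ∀ β : ℝ, β ∈ Set.Ioo (0:ℝ) δ → fStar μ X v β ≤ ((B β : ℝ) : EReal) := by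
      intro β hβ
      rw [fStar]
      refine iSup_le fun t => ?_
      rw [EReal.coe_le_coe_iff]
      set Iv := ∫ ω, v (X ω + t) ∂μ with hIv
      have h1 : t * δ - Iv ≤ -(δ * EX + a) := by
        have := hlow t
        rw [← hIv] at this
        linarith
      have h2 : -Iv ≤ r0 := hr0ge t
      have hδ0 : (0:ℝ) < δ := hx₀
      have hl0 : 0 ≤ β / δ := div_nonneg hβ.1.le hδ0.le
      have hl1 : β / δ ≤ 1 := by
        rw [div_le_one hδ0]
        exact hβ.2.le
      have he : t * β - Iv = (β / δ) * (t * δ - Iv) + (1 - β / δ) * (-Iv) := by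
        field_simp
        ring
      rw [he]
      exact add_le_add (mul_le_mul_of_nonneg_left h1 hl0)
        (mul_le_mul_of_nonneg_left h2 (by linarith))
    have hev : ∀ᶠ β in nhdsWithin (0:ℝ) (Set.Ioi 0), fStar μ X v β ≤ ((B β : ℝ) : EReal) := by
      filter_upwards [Ioo_mem_nhdsGT_of_mem (Set.left_mem_Ico.2 hx₀)] with β hβ
      exact key β hβ
    have hBtend : Tendsto (fun β : ℝ => ((B β : ℝ) : EReal)) (nhdsWithin 0 (Set.Ioi 0))
        (nhds ((r0 : ℝ) : EReal)) := by
      have hB0 : B 0 = r0 := by simp [hBdef]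
      have hcont : ContinuousAt B 0 := by fun_prop
      have h2 := hcont.tendsto.mono_left (nhdsWithin_le_nhds : nhdsWithin (0:ℝ) (Set.Ioi 0) ≤ nhds 0)
      rw [hB0] at h2
      exact (continuous_coe_real_ereal.tendsto _).comp h2
    calc limsup (fun β : ℝ => fStar μ X v β) (nhdsWithin 0 (Set.Ioi 0))
        ≤ limsup (fun β : ℝ => ((B β : ℝ) : EReal)) (nhdsWithin 0 (Set.Ioi 0)) :=
          limsup_le_limsup hev
      _ = ((r0 : ℝ) : EReal) := hBtend.limsup_eq
      _ = fStar μ X v 0 := hr0.symm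
end
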